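/- arXiv:1805.07403 — 2 statements merged into one kernel-verified Lean document; each statement's English description precedes it below -/
import Mathlib

section
/- As T → ∞, the normalized SABR martingale defect satisfies the asymptotic expansion d(T) = 1 - e^{-2γ} - (8√γ / √(ν⁶T³)) e^{-(γ + ν²T/8)} K_0(γ) (1 + O(T^{-1/2})), where γ = ρα/ν > 0 and K_0 is the modified Bessel function of the second kind of order 0. -/
open MeasureTheory ProbabilityTheory Filter Set
open scoped ENNReal NNReal

noncomputable section

/-- Standard Brownian motion with respect to a measure `μ`. -/
structure IsBrownianMotion {Ω : Type*} {mΩ : MeasurableSpace Ω} (μ : Measure Ω)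
    (W : ℝ → Ω → ℝ) : Prop where
  meas : ∀ t, Measurable (W t)
  init : ∀ᵐ ω ∂μ, W 0 ω = 0
  cont : ∀ᵐ ω ∂μ, Continuous fun t => W t ω
  incr : ∀ s t : ℝ, 0 ≤ s → s ≤ t →
    μ.map (fun ω => W t ω - W s ω) = gaussianReal 0 (Real.toNNReal (t - s))
  indep : ∀ n : ℕ, ∀ u : ℕ → ℝ, Monotone u → (∀ i, 0 ≤ u i) →
    iIndepFun
      (fun i : Fin n => fun ω => W (u (i + 1)) ω - W (u i) ω) μ

/-- Riemann sum along dyadic partitions approximating the Itô integral `∫_0^t H dW`. -/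
def itoSum {Ω : Type*} (H W : ℝ → Ω → ℝ) (t : ℝ) (n : ℕ) (ω : Ω) : ℝ :=
  ∑ k ∈ Finset.range (2 ^ n),
    H (t * k / 2 ^ n) ω * (W (t * (k + 1) / 2 ^ n) ω - W (t * k / 2 ^ n) ω)

/-- `I` is the Itô integral process `∫_0^t H dW`: the dyadic Riemann sums converge in
probability to `I t` for every `t ≥ 0`. -/
def IsItoIntegral {Ω : Type*} {mΩ : MeasurableSpace Ω} (μ : Measure Ω)
    (H W I : ℝ → Ω → ℝ) : Prop :=
  ∀ t : ℝ, 0 ≤ t → TendstoInMeasure μ (fun n => itoSum H W t n) atTop (I t)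

/-- `X` solves the SDE `dX_t = b(X_t) dt + σ(X_t) dW_t`, `X_0 = x₀`. -/
def SolvesSDE {Ω : Type*} {mΩ : MeasurableSpace Ω} (μ : Measure Ω)
    (W X : ℝ → Ω → ℝ) (b σ : ℝ → ℝ) (x₀ : ℝ) : Prop :=
  (∀ᵐ ω ∂μ, X 0 ω = x₀) ∧
  ∃ I : ℝ → Ω → ℝ, IsItoIntegral μ (fun t ω => σ (X t ω)) W I ∧
    ∀ t : ℝ, 0 ≤ t → ∀ᵐ ω ∂μ, X t ω = x₀ + (∫ s in (0:ℝ)..t, b (X s ω)) + I t ω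

/-- A process is a local martingale if there is a localizing sequence of stopping times. -/
def IsLocalMartingale {Ω : Type*} {mΩ : MeasurableSpace Ω} (μ : Measure Ω)
    (ℱ : Filtration ℝ mΩ) (X : ℝ → Ω → ℝ) : Prop :=
  ∃ τ : ℕ → Ω → ℝ, (∀ n, IsStoppingTime ℱ (fun ω => ((τ n ω : ℝ) : WithTop ℝ))) ∧
    (∀ᵐ ω ∂μ, Tendsto (fun n => τ n ω) atTop atTop) ∧
    ∀ n, Martingale (MeasureTheory.stoppedProcess X (fun ω => ((τ n ω : ℝ) : WithTop ℝ))) ℱ μ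

/-- A process is a (true) martingale on the time interval `[0, T₀]`. -/
def MartingaleOn {Ω : Type*} {mΩ : MeasurableSpace Ω} (μ : Measure Ω)
    (ℱ : Filtration ℝ mΩ) (X : ℝ → Ω → ℝ) (T₀ : ℝ) : Prop :=
  Adapted ℱ X ∧ (∀ t ∈ Set.Icc (0:ℝ) T₀, Integrable (X t) μ) ∧
  ∀ s t : ℝ, 0 ≤ s → s ≤ t → t ≤ T₀ → μ[X t | ℱ s] =ᵐ[μ] X s

/-- The cumulative distribution function of the standard normal distribution. -/
def stdNormalCDF (z : ℝ) : ℝ := ∫ x in Set.Iic z, gaussianPDFReal 0 1 x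

/-- The modified Bessel function of the second kind of imaginary order `iμ`,
via its real integral representation `K_{iμ}(γ) = ∫_0^∞ e^{-γ cosh t} cos(μ t) dt`. -/
def besselKi (m γ : ℝ) : ℝ :=
  ∫ t in Set.Ioi (0:ℝ), Real.exp (-γ * Real.cosh t) * Real.cos (m * t)

/-- The modified Bessel function of the first kind of real order `l`. -/
def besselI (l x : ℝ) : ℝ :=
  ∑' n : ℕ, (x / 2) ^ (2 * n) * (x / 2) ^ l / (n.factorial * Real.Gamma (n + l + 1))

/-- Kummer's confluent hypergeometric function `M(a, b, z) = ₁F₁(a; b; z)`. -/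
def kummerM (a b z : ℝ) : ℝ :=
  ∑' n : ℕ, ((∏ k ∈ Finset.range n, (a + k)) / (∏ k ∈ Finset.range n, (b + k)))
    * z ^ n / n.factorial

/-- The function `A_c(γ, τ)` from the SABR martingale defect formula. -/
def Ac (γ τ : ℝ) : ℝ :=
  Real.sqrt (2 * γ / Real.pi ^ 3) * Real.exp (-(γ + τ / 8)) *
    ∫ s in Set.Ioi (0:ℝ),
      (8 * s * Real.sinh (Real.pi * s) / (4 * s ^ 2 + 1)) * besselKi s γ *
        Real.exp (-s ^ 2 * τ / 2)

/-- `Y` solves the SDE `dY_t = b(Y_t) dt + σ(Y_t) dW_t`, `Y_0 = y₀`, up to the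
(possibly infinite) explosion time `ζ`. -/
def SolvesSDEUpTo {Ω : Type*} {mΩ : MeasurableSpace Ω} (μ : Measure Ω)
    (W Y : ℝ → Ω → ℝ) (b σ : ℝ → ℝ) (y₀ : ℝ) (ζ : Ω → ℝ≥0∞) : Prop :=
  (∀ᵐ ω ∂μ, Y 0 ω = y₀) ∧
  ∃ I : ℝ → Ω → ℝ,
    (∀ t : ℝ, 0 ≤ t →
      TendstoInMeasure (μ.restrict {ω | ENNReal.ofReal t < ζ ω})
        (fun n => itoSum (fun u ω => σ (Y u ω)) W t n) atTop (I t)) ∧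
    ∀ t : ℝ, 0 ≤ t → ∀ᵐ ω ∂μ.restrict {ω | ENNReal.ofReal t < ζ ω},
      Y t ω = y₀ + (∫ s in (0:ℝ)..t, b (Y s ω)) + I t ω

/-- The first hitting time of zero of a process, as an extended real number. -/
def hitZeroTime {Ω : Type*} (X : ℝ → Ω → ℝ) (ω : Ω) : ℝ≥0∞ :=
  ⨅ (s : {s : ℝ // 0 ≤ s ∧ X s ω = 0}), ENNReal.ofReal s.1

/-!
Write the integrand of `Ac γ τ` as `g(s) e^{-s²τ/2}` with
`g(s) = 8 s sinh(πs) K_{is}(γ) / (4s² + 1)`. From `sinh x = x + O(x² eˣ)`, `|K_{is}| ≤ K₀` and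
`|K_{is} - K₀| ≤ (s²/2) ∫ t² e^{-γ cosh t} dt` one gets `g(s) = 8π K₀ s² + O(s³ e^{πs})` uniformly
in `s > 0`. Watson's lemma then gives `∫ g e^{-s²τ/2} = 8π K₀ √(2π) / (2τ^{3/2}) + O(τ^{-2})`:
the main term is a Gaussian second moment, and for `τ ≥ 1` the growth `e^{πs}` is absorbed by
`e^{πs - s²τ/2} ≤ e^{π²} e^{-τs²/4}`, leaving a Gaussian third moment `8/τ²`. Multiplying by the
prefactor of `Ac` and putting `τ = ν²T` gives the expansion with relative error `O(T^{-1/2})`.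
-/

open Real

theorem integral_Ioi_sq_mul_exp_neg_mul_sq {b : ℝ} (hb : 0 < b) :
    ∫ x in Ioi (0 : ℝ), x ^ 2 * exp (-b * x ^ 2) = √π / (4 * b * √b) := by
  have h := integral_rpow_mul_exp_neg_mul_rpow (p := 2) (q := 2) two_pos (by norm_num) hb
  simp only [rpow_two] at h
  rw [h, show -((2 : ℝ) + 1) / 2 = -(1 + 1 / 2) by norm_num, rpow_neg hb.le, rpow_add hb,
    rpow_one, ← sqrt_eq_rpow, show ((2 : ℝ) + 1) / 2 = 1 / 2 + 1 by norm_num,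
    Gamma_add_one (by norm_num), Gamma_one_half_eq]
  field_simp
  ring

theorem integral_Ioi_pow_three_mul_exp_neg_mul_sq {b : ℝ} (hb : 0 < b) :
    ∫ x in Ioi (0 : ℝ), x ^ 3 * exp (-b * x ^ 2) = 1 / (2 * b ^ 2) := by
  have h := integral_rpow_mul_exp_neg_mul_rpow (p := 2) (q := 3) two_pos (by norm_num) hb
  simp only [rpow_two, show (3 : ℝ) = (3 : ℕ) by norm_num, rpow_natCast] at h
  rw [h, show -(((3 : ℕ) : ℝ) + 1) / 2 = -(2 : ℕ) by norm_num, rpow_neg hb.le, rpow_natCast,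
    show (((3 : ℕ) : ℝ) + 1) / 2 = 2 by norm_num, Gamma_two]
  field_simp

theorem integrableOn_Ioi_pow_mul_exp_neg_mul_sq (n : ℕ) {b : ℝ} (hb : 0 < b) :
    IntegrableOn (fun x : ℝ => x ^ n * exp (-b * x ^ 2)) (Ioi 0) := by
  simpa only [rpow_natCast] using
    integrableOn_rpow_mul_exp_neg_mul_sq hb (s := n) (by linarith [n.cast_nonneg (α := ℝ)])

theorem exp_mul_mul_exp_neg_sq_mul_div_two_le {c s τ : ℝ} (hτ : 1 ≤ τ) :
    exp (c * s) * exp (-s ^ 2 * τ / 2) ≤ exp (c ^ 2) * exp (-(τ / 4) * s ^ 2) := by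
  rw [← exp_add, ← exp_add, exp_le_exp]
  nlinarith [sq_nonneg (s - 2 * c), mul_le_mul_of_nonneg_left hτ (sq_nonneg s)]

theorem abs_integral_mul_exp_neg_sq_mul_div_two_sub_le {g : ℝ → ℝ} {a B c τ : ℝ}
    (hg : AEStronglyMeasurable g (volume.restrict (Ioi 0)))
    (hgB : ∀ s > 0, |g s - a * s ^ 2| ≤ B * s ^ 3 * exp (c * s)) (hτ : 1 ≤ τ) :
    |(∫ s in Ioi (0 : ℝ), g s * exp (-s ^ 2 * τ / 2)) - a * √(2 * π) / (2 * τ * √τ)|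
      ≤ 8 * B * exp (c ^ 2) / τ ^ 2 := by
  have hτ0 : 0 < τ := one_pos.trans_le hτ
  have hB : 0 ≤ B := by nlinarith [(abs_nonneg _).trans (hgB 1 one_pos), exp_pos (c * 1)]
  have hsq : ∀ s : ℝ, -s ^ 2 * τ / 2 = -(τ / 2) * s ^ 2 := fun s => by ring
  have hmain : IntegrableOn (fun s => a * (s ^ 2 * exp (-s ^ 2 * τ / 2))) (Ioi 0) := by
    simp only [hsq]
    exact (integrableOn_Ioi_pow_mul_exp_neg_mul_sq 2 (half_pos hτ0)).const_mul a
  have hmoment : ∫ s in Ioi (0 : ℝ), a * (s ^ 2 * exp (-s ^ 2 * τ / 2))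
      = a * √(2 * π) / (2 * τ * √τ) := by
    rw [integral_const_mul]
    simp only [hsq]
    rw [integral_Ioi_sq_mul_exp_neg_mul_sq (half_pos hτ0), sqrt_div' _ two_pos.le,
      sqrt_mul two_pos.le]
    field_simp
    ring
  have hbound : IntegrableOn (fun s => B * exp (c ^ 2) * (s ^ 3 * exp (-(τ / 4) * s ^ 2)))
      (Ioi 0) := (integrableOn_Ioi_pow_mul_exp_neg_mul_sq 3 (by positivity)).const_mul _
  have hrem_le : ∀ᵐ s ∂volume.restrict (Ioi (0 : ℝ)),
      ‖(g s - a * s ^ 2) * exp (-s ^ 2 * τ / 2)‖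
        ≤ B * exp (c ^ 2) * (s ^ 3 * exp (-(τ / 4) * s ^ 2)) := by
    filter_upwards [ae_restrict_mem measurableSet_Ioi] with s hs
    rw [norm_mul, Real.norm_eq_abs, norm_of_nonneg (exp_pos _).le]
    calc |g s - a * s ^ 2| * exp (-s ^ 2 * τ / 2)
        ≤ B * s ^ 3 * exp (c * s) * exp (-s ^ 2 * τ / 2) := by gcongr; exact hgB s hs
      _ = B * s ^ 3 * (exp (c * s) * exp (-s ^ 2 * τ / 2)) := by ring
      _ ≤ B * s ^ 3 * (exp (c ^ 2) * exp (-(τ / 4) * s ^ 2)) := by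
          exact mul_le_mul_of_nonneg_left (exp_mul_mul_exp_neg_sq_mul_div_two_le hτ)
            (mul_nonneg hB (pow_nonneg (le_of_lt hs) 3))
      _ = B * exp (c ^ 2) * (s ^ 3 * exp (-(τ / 4) * s ^ 2)) := by ring
  have hrem : IntegrableOn (fun s => (g s - a * s ^ 2) * exp (-s ^ 2 * τ / 2)) (Ioi 0) :=
    hbound.mono' ((hg.sub (by fun_prop)).mul (by fun_prop)) hrem_le
  have hsplit : (fun s => g s * exp (-s ^ 2 * τ / 2))
      = fun s => (g s - a * s ^ 2) * exp (-s ^ 2 * τ / 2) + a * (s ^ 2 * exp (-s ^ 2 * τ / 2)) := by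
    ext s; ring
  rw [hsplit, integral_add hrem hmain, hmoment, add_sub_cancel_right, ← Real.norm_eq_abs]
  calc _ ≤ ∫ s in Ioi (0 : ℝ), B * exp (c ^ 2) * (s ^ 3 * exp (-(τ / 4) * s ^ 2)) :=
        norm_integral_le_of_norm_le hbound hrem_le
    _ = 8 * B * exp (c ^ 2) / τ ^ 2 := by
        rw [integral_const_mul, integral_Ioi_pow_three_mul_exp_neg_mul_sq (by positivity)]
        field_simp
        ring

theorem sq_div_two_le_cosh (x : ℝ) : x ^ 2 / 2 ≤ cosh x := by
  simpa using le_hasSum (hasSum_cosh x) 1 fun n _ => by rw [pow_mul]; positivity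

theorem integrableOn_Ioi_pow_mul_exp_neg_mul_cosh (n : ℕ) {γ : ℝ} (hγ : 0 < γ) :
    IntegrableOn (fun t : ℝ => t ^ n * exp (-γ * cosh t)) (Ioi 0) := by
  refine (integrableOn_Ioi_pow_mul_exp_neg_mul_sq n (half_pos hγ)).mono' (by fun_prop) ?_
  filter_upwards [ae_restrict_mem measurableSet_Ioi] with t (ht : 0 < t)
  rw [norm_mul, norm_of_nonneg (exp_pos _).le, norm_of_nonneg (pow_nonneg ht.le n)]
  exact mul_le_mul_of_nonneg_left (exp_le_exp.2 (by nlinarith [sq_div_two_le_cosh t]))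
    (pow_nonneg ht.le n)

theorem integrableOn_Ioi_exp_neg_mul_cosh {γ : ℝ} (hγ : 0 < γ) :
    IntegrableOn (fun t : ℝ => exp (-γ * cosh t)) (Ioi 0) := by
  simpa using integrableOn_Ioi_pow_mul_exp_neg_mul_cosh 0 hγ

theorem norm_exp_neg_mul_cosh_mul_cos_le (γ s t : ℝ) :
    ‖exp (-γ * cosh t) * cos (s * t)‖ ≤ exp (-γ * cosh t) := by
  rw [norm_mul, norm_of_nonneg (exp_pos _).le, Real.norm_eq_abs]
  exact mul_le_of_le_one_right (exp_pos _).le (abs_cos_le_one _)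

theorem besselKi_zero (γ : ℝ) : besselKi 0 γ = ∫ t in Ioi (0 : ℝ), exp (-γ * cosh t) := by
  simp [besselKi]

theorem besselKi_zero_pos {γ : ℝ} (hγ : 0 < γ) : 0 < besselKi 0 γ := by
  have : NeZero (volume.restrict (Ioi (0 : ℝ))) := ⟨by simp [Measure.restrict_eq_zero]⟩
  rw [besselKi_zero]
  exact integral_exp_pos (integrableOn_Ioi_exp_neg_mul_cosh hγ)

theorem abs_besselKi_le {γ : ℝ} (hγ : 0 < γ) (s : ℝ) : |besselKi s γ| ≤ besselKi 0 γ := by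
  rw [besselKi_zero, ← Real.norm_eq_abs]
  exact norm_integral_le_of_norm_le (integrableOn_Ioi_exp_neg_mul_cosh hγ)
    (Eventually.of_forall (norm_exp_neg_mul_cosh_mul_cos_le γ s))

theorem abs_besselKi_sub_besselKi_zero_le {γ : ℝ} (hγ : 0 < γ) (s : ℝ) :
    |besselKi s γ - besselKi 0 γ|
      ≤ s ^ 2 / 2 * ∫ t in Ioi (0 : ℝ), t ^ 2 * exp (-γ * cosh t) := by
  have hK := integrableOn_Ioi_exp_neg_mul_cosh hγ
  have hKs : IntegrableOn (fun t => exp (-γ * cosh t) * cos (s * t)) (Ioi 0) :=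
    hK.mono' (by fun_prop) (Eventually.of_forall (norm_exp_neg_mul_cosh_mul_cos_le γ s))
  rw [besselKi_zero, besselKi, ← integral_sub hKs hK, ← integral_const_mul, ← Real.norm_eq_abs]
  refine norm_integral_le_of_norm_le ((integrableOn_Ioi_pow_mul_exp_neg_mul_cosh 2 hγ).const_mul _)
    (Eventually.of_forall fun t => ?_)
  have hcos : 1 - cos (s * t) ≤ (s * t) ^ 2 / 2 := by
    linarith [one_sub_sq_div_two_le_cos (x := s * t)]
  rw [Real.norm_eq_abs, show exp (-γ * cosh t) * cos (s * t) - exp (-γ * cosh t)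
      = -(exp (-γ * cosh t) * (1 - cos (s * t))) by ring, abs_neg,
    abs_of_nonneg (mul_nonneg (exp_pos _).le (by linarith [cos_le_one (s * t)]))]
  calc exp (-γ * cosh t) * (1 - cos (s * t)) ≤ exp (-γ * cosh t) * ((s * t) ^ 2 / 2) := by gcongr
    _ = s ^ 2 / 2 * (t ^ 2 * exp (-γ * cosh t)) := by ring

theorem continuous_besselKi {γ : ℝ} (hγ : 0 < γ) : Continuous fun s => besselKi s γ :=
  continuous_of_dominated (fun _ => by fun_prop)
    (fun s => Eventually.of_forall (norm_exp_neg_mul_cosh_mul_cos_le γ s))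
    (integrableOn_Ioi_exp_neg_mul_cosh hγ)
    (Eventually.of_forall fun _ => by fun_prop)

theorem sinh_sub_self_le {x : ℝ} (hx : 0 ≤ x) : sinh x - x ≤ x ^ 2 * exp x := by
  rcases le_total x 1 with hx1 | hx1
  · have hpos := abs_exp_sub_one_sub_id_le (x := x) (by rw [abs_of_nonneg hx]; exact hx1)
    have hneg := abs_exp_sub_one_sub_id_le (x := -x) (by rw [abs_neg, abs_of_nonneg hx]; exact hx1)
    rw [sinh_eq]
    nlinarith [abs_le.mp hpos, abs_le.mp hneg, one_le_exp hx]
  · have : exp x ≤ x ^ 2 * exp x := le_mul_of_one_le_left (exp_pos x).le (by nlinarith)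
    rw [sinh_eq]
    linarith [exp_pos (-x), exp_pos x]

theorem self_le_exp_pi_mul {s : ℝ} (hs : 0 ≤ s) : s ≤ exp (π * s) := by
  have := add_one_le_exp (π * s)
  nlinarith [pi_gt_three]

theorem abs_mul_sinh_pi_mul_div_sub_le {s : ℝ} (hs : 0 ≤ s) :
    |8 * s * sinh (π * s) / (4 * s ^ 2 + 1) - 8 * π * s ^ 2|
      ≤ (8 * π ^ 2 + 32 * π) * s ^ 3 * exp (π * s) := by
  have hx : 0 ≤ π * s := mul_nonneg pi_pos.le hs
  have hsinh_lower : π * s ≤ sinh (π * s) := self_le_sinh_iff.2 hx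
  have hsinh_upper := sinh_sub_self_le hx
  have hs4 : s ^ 4 ≤ s ^ 3 * exp (π * s) := by
    rw [pow_succ]; exact mul_le_mul_of_nonneg_left (self_le_exp_pi_mul hs) (by positivity)
  have hsinh_term : 8 * s * (sinh (π * s) - π * s) ≤ 8 * π ^ 2 * s ^ 3 * exp (π * s) :=
    calc 8 * s * (sinh (π * s) - π * s) ≤ 8 * s * ((π * s) ^ 2 * exp (π * s)) := by gcongr
      _ = 8 * π ^ 2 * s ^ 3 * exp (π * s) := by ring
  have hnum : |8 * s * (sinh (π * s) - π * s) - 32 * π * s ^ 4|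
      ≤ (8 * π ^ 2 + 32 * π) * s ^ 3 * exp (π * s) := by
    have hpow_term : π * s ^ 4 ≤ π * (s ^ 3 * exp (π * s)) :=
      mul_le_mul_of_nonneg_left hs4 pi_pos.le
    have hexp_term : 0 ≤ π * (s ^ 3 * exp (π * s)) := by positivity
    have hsq_term : 0 ≤ π ^ 2 * (s ^ 3 * exp (π * s)) := by positivity
    exact abs_sub_le_of_nonneg_of_le (mul_nonneg (by positivity) (sub_nonneg.2 hsinh_lower))
      (by linarith) (by positivity) (by linarith)
  rw [show 8 * s * sinh (π * s) / (4 * s ^ 2 + 1) - 8 * π * s ^ 2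
      = (8 * s * (sinh (π * s) - π * s) - 32 * π * s ^ 4) / (4 * s ^ 2 + 1) by field_simp; ring,
    abs_div, abs_of_pos (by positivity : (0 : ℝ) < 4 * s ^ 2 + 1)]
  exact (div_le_self (abs_nonneg _) (by nlinarith)).trans hnum

theorem exists_abs_Ac_integrand_sub_le {γ : ℝ} (hγ : 0 < γ) :
    ∃ B > 0, ∀ s > 0,
      |8 * s * sinh (π * s) / (4 * s ^ 2 + 1) * besselKi s γ - 8 * π * besselKi 0 γ * s ^ 2|
        ≤ B * s ^ 3 * exp (π * s) := by
  set K₀ := besselKi 0 γ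
  set C₂ := ∫ t in Ioi (0 : ℝ), t ^ 2 * exp (-γ * cosh t)
  have hK₀ : 0 < K₀ := besselKi_zero_pos hγ
  have hC₂ : 0 ≤ C₂ := setIntegral_nonneg measurableSet_Ioi fun t _ => by positivity
  refine ⟨(8 * π ^ 2 + 32 * π) * K₀ + 4 * π * C₂, by positivity, fun s hs => ?_⟩
  have hweight := abs_mul_sinh_pi_mul_div_sub_le hs.le
  have hK := abs_besselKi_le hγ s
  have hdiff := abs_besselKi_sub_besselKi_zero_le hγ s
  have hs4 : s ^ 4 ≤ s ^ 3 * exp (π * s) := by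
    rw [pow_succ]; exact mul_le_mul_of_nonneg_left (self_le_exp_pi_mul hs.le) (by positivity)
  calc _ = |(8 * s * sinh (π * s) / (4 * s ^ 2 + 1) - 8 * π * s ^ 2) * besselKi s γ
          + 8 * π * s ^ 2 * (besselKi s γ - K₀)| := by congr 1; ring
    _ ≤ (8 * π ^ 2 + 32 * π) * s ^ 3 * exp (π * s) * K₀ + 8 * π * s ^ 2 * (s ^ 2 / 2 * C₂) := by
        refine (abs_add_le _ _).trans (add_le_add ?_ ?_) <;> rw [abs_mul]
        · exact mul_le_mul hweight hK (abs_nonneg _) (by positivity)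
        · rw [abs_of_nonneg (by positivity)]; gcongr
    _ = (8 * π ^ 2 + 32 * π) * K₀ * (s ^ 3 * exp (π * s)) + 4 * π * C₂ * s ^ 4 := by ring
    _ ≤ ((8 * π ^ 2 + 32 * π) * K₀ + 4 * π * C₂) * s ^ 3 * exp (π * s) := by
        nlinarith [mul_le_mul_of_nonneg_left hs4 (by positivity : 0 ≤ 4 * π * C₂)]

theorem sqrt_two_mul_div_pi_cube_mul_sqrt_two_pi {γ : ℝ} (hγ : 0 ≤ γ) :
    √(2 * γ / π ^ 3) * √(2 * π) * π = 2 * √γ := by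
  rw [← sqrt_mul (by positivity), show 2 * γ / π ^ 3 * (2 * π) = (2 * √γ / π) ^ 2 by
    rw [div_pow, mul_pow, sq_sqrt hγ]; field_simp, sqrt_sq (by positivity)]
  field_simp

theorem exists_abs_Ac_sub_le {γ : ℝ} (hγ : 0 < γ) :
    ∃ M > 0, ∀ τ, 1 ≤ τ →
      |Ac γ τ - 8 * √γ / (τ * √τ) * exp (-(γ + τ / 8)) * besselKi 0 γ|
        ≤ M * (8 * √γ / (τ * √τ) * exp (-(γ + τ / 8)) * besselKi 0 γ) / √τ := by
  obtain ⟨B, hB, hg⟩ := exists_abs_Ac_integrand_sub_le hγ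
  have hK₀ := besselKi_zero_pos hγ
  have hsqγ : 0 < √γ := sqrt_pos.2 hγ
  refine ⟨√(2 * γ / π ^ 3) * B * exp (π ^ 2) / (√γ * besselKi 0 γ), by positivity,
    fun τ hτ => ?_⟩
  have hτ0 : 0 < τ := one_pos.trans_le hτ
  have hsqτ : 0 < √τ := sqrt_pos.2 hτ0
  have hg_cont : Continuous fun s => 8 * s * sinh (π * s) / (4 * s ^ 2 + 1) * besselKi s γ :=
    (Continuous.div (by fun_prop) (by fun_prop) fun s => by positivity).mul (continuous_besselKi hγ)
  have hwatson := abs_integral_mul_exp_neg_sq_mul_div_two_sub_le hg_cont.aestronglyMeasurable hg hτ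
  set P := √(2 * γ / π ^ 3) * exp (-(γ + τ / 8)) with hPdef
  have hP : 0 ≤ P := by positivity
  have hlead : 8 * √γ / (τ * √τ) * exp (-(γ + τ / 8)) * besselKi 0 γ
      = P * (8 * π * besselKi 0 γ * √(2 * π) / (2 * τ * √τ)) := by
    rw [show 8 * √γ = 4 * (2 * √γ) by ring, ← sqrt_two_mul_div_pi_cube_mul_sqrt_two_pi hγ.le, hPdef]
    field_simp
    norm_num
  calc _ = P * |(∫ s in Ioi (0 : ℝ), 8 * s * sinh (π * s) / (4 * s ^ 2 + 1) * besselKi s γ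
          * exp (-s ^ 2 * τ / 2)) - 8 * π * besselKi 0 γ * √(2 * π) / (2 * τ * √τ)| := by
        rw [hlead, Ac, ← mul_sub, abs_mul, abs_of_nonneg hP]
    _ ≤ P * (8 * B * exp (π ^ 2) / τ ^ 2) := mul_le_mul_of_nonneg_left hwatson hP
    _ = _ := by
        rw [hPdef]
        field_simp
        rw [sq_sqrt hτ0.le]

/-- Large-maturity asymptotics of the normalized SABR martingale defect:
`d(T) = 1 - e^{-2γ} - (8√γ/√(ν⁶T³)) e^{-(γ + ν²T/8)} K₀(γ) (1 + O(T^{-1/2}))`. -/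
theorem sabr_defect_large_time_asymptotics
    (γ ν : ℝ) (hγ : 0 < γ) (hν : 0 < ν) :
    ∃ C : ℝ, 0 < C ∧ ∃ T₀ : ℝ, 0 < T₀ ∧ ∀ T : ℝ, T₀ ≤ T →
      |(1 - Real.exp (-2 * γ) - Ac γ (ν ^ 2 * T))
          - (1 - Real.exp (-2 * γ)
            - (8 * Real.sqrt γ / Real.sqrt (ν ^ 6 * T ^ 3))
              * Real.exp (-(γ + ν ^ 2 * T / 8)) * besselKi 0 γ)|
        ≤ C * ((8 * Real.sqrt γ / Real.sqrt (ν ^ 6 * T ^ 3))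
              * Real.exp (-(γ + ν ^ 2 * T / 8)) * besselKi 0 γ) / Real.sqrt T := by
  obtain ⟨M, hM, hAc⟩ := exists_abs_Ac_sub_le hγ
  refine ⟨M / ν, div_pos hM hν, 1 / ν ^ 2, by positivity, fun T hT => ?_⟩
  have hτ : 1 ≤ ν ^ 2 * T := by rwa [div_le_iff₀' (by positivity)] at hT
  have hsqrt_τ : √(ν ^ 2 * T) = ν * √T := by rw [sqrt_mul (sq_nonneg ν), sqrt_sq hν.le]
  have hsqrt_τ_cube : √(ν ^ 6 * T ^ 3) = ν ^ 2 * T * √(ν ^ 2 * T) := by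
    rw [show ν ^ 6 * T ^ 3 = (ν ^ 2 * T) ^ 2 * (ν ^ 2 * T) by ring, sqrt_mul (by positivity),
      sqrt_sq (by positivity)]
  rw [hsqrt_τ_cube, sub_sub_sub_cancel_left, abs_sub_comm]
  exact (hAc _ hτ).trans_eq (by rw [hsqrt_τ]; ring)
end
end

section
/- For fixed s > 0, let λ = √(1/4 + s) and a_+ = 1/2 + λ. Then the function g(z) = (1/s) · (Γ(a_+)/Γ(2a_+)) · z^{a_+} M(a_+, 2a_+, -z), where M is Kummer's confluent hypergeometric function, is the unique solution on (0,∞) of the ODE z² g''(z) + z² g'(z) - s g(z) = 0 with boundary conditions g(0) = 0 and g(z) → 1/s as z → ∞. -/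
open MeasureTheory ProbabilityTheory Filter Set
open scoped ENNReal NNReal

noncomputable section

/-! The Euler integral `M(a, 2a, -z) = Γ(2a)/Γ(a)² ∫₀¹ e^{-zt} (t(1-t))^{a-1} dt` makes `g` a
multiple of `φ(z) = z^a ∫₀¹ e^{-zt} (t(1-t))^{a-1} dt`. Differentiating under the integral sign and
integrating `d/dt [e^{-zt} tᵃ (1-t)ᵃ]` over `[0, 1]` yields Kummer's equation for the integral,
which for `φ` reads `z²φ'' + z²φ' = a(a-1)φ = sφ`. The substitution `u = zt` and dominated
convergence give `φ(z) → Γ(a)` as `z → ∞`, while `φ(0⁺) = 0` because `a > 0`.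

Uniqueness is a maximum principle: the difference of two solutions tends to `0` at both ends, and
at a positive interior maximum its first derivative vanishes and its second is `≤ 0`, which is
incompatible with `z²u'' + z²u' = su > 0`. -/

open Real Topology intervalIntegral

theorem IsLocalMax.deriv_deriv_nonpos {f : ℝ → ℝ} {x : ℝ} (h : IsLocalMax f x)
    (hc : ContinuousAt f x) : deriv (deriv f) x ≤ 0 := by
  by_contra! hpos
  have hmin : IsLocalMin f x := isLocalMin_of_deriv_deriv_pos hpos h.deriv_eq_zero hc
  have hconst : f =ᶠ[𝓝 x] fun _ => f x :=
    (Filter.Eventually.and h hmin).mono fun y hy => le_antisymm hy.1 hy.2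
  rw [hconst.deriv.deriv_eq] at hpos
  simp at hpos

theorem exists_isLocalMax_ge_of_tendsto_zero {u : ℝ → ℝ} (hu : ContinuousOn u (Ioi 0))
    (h0 : Tendsto u (𝓝[>] 0) (𝓝 0)) (hinf : Tendsto u atTop (𝓝 0)) {z₀ : ℝ} (hz₀ : 0 < z₀)
    (hpos : 0 < u z₀) : ∃ ζ > 0, IsLocalMax u ζ ∧ u z₀ ≤ u ζ := by
  obtain ⟨ε, huε, hε⟩ :=
    ((h0.eventually (gt_mem_nhds hpos)).and (Ioo_mem_nhdsGT hz₀)).exists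
  obtain ⟨R, huR, hR⟩ :=
    ((hinf.eventually (gt_mem_nhds hpos)).and (eventually_gt_atTop z₀)).exists
  have hεR : ε ≤ R := hε.2.le.trans hR.le
  obtain ⟨ζ, hζ, hmax⟩ := isCompact_Icc.exists_isMaxOn_mem_subset (s := Ioo ε R)
    (hu.mono fun x hx => hε.1.trans_le hx.1) (⟨hε.2.le, hR.le⟩ : z₀ ∈ Icc ε R) (by
      rw [Icc_sdiff_Ioo_same hεR]
      rintro x (rfl | rfl) <;> assumption)
  exact ⟨ζ, hε.1.trans hζ.1, hmax.isLocalMax (Icc_mem_nhds hζ.1 hζ.2),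
    hmax ⟨hε.2.le, hR.le⟩⟩

theorem nonpos_of_ode_of_tendsto_zero {u a b c : ℝ → ℝ} (hu : ContinuousOn u (Ioi 0))
    (ha : ∀ z > 0, 0 ≤ a z) (hc : ∀ z > 0, 0 < c z)
    (hode : ∀ z > 0, a z * deriv (deriv u) z + b z * deriv u z = c z * u z)
    (h0 : Tendsto u (𝓝[>] 0) (𝓝 0)) (hinf : Tendsto u atTop (𝓝 0)) {z : ℝ} (hz : 0 < z) :
    u z ≤ 0 := by
  by_contra! hpos
  obtain ⟨ζ, hζ, hmax, hle⟩ := exists_isLocalMax_ge_of_tendsto_zero hu h0 hinf hz hpos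
  have hcrit := hode ζ hζ
  rw [hmax.deriv_eq_zero, mul_zero, add_zero] at hcrit
  have hconcave := hmax.deriv_deriv_nonpos (hu.continuousAt (Ioi_mem_nhds hζ))
  nlinarith [mul_nonpos_of_nonneg_of_nonpos (ha ζ hζ) hconcave,
    mul_pos (hc ζ hζ) (hpos.trans_le hle)]

theorem le_of_ode_of_tendsto {f g a b c : ℝ → ℝ} {L₀ L : ℝ}
    (hf : ∀ z > 0, ContDiffAt ℝ 2 f z) (hg : ∀ z > 0, ContDiffAt ℝ 2 g z)
    (ha : ∀ z > 0, 0 ≤ a z) (hc : ∀ z > 0, 0 < c z)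
    (hf_ode : ∀ z > 0, a z * deriv (deriv f) z + b z * deriv f z = c z * f z)
    (hg_ode : ∀ z > 0, a z * deriv (deriv g) z + b z * deriv g z = c z * g z)
    (hf0 : Tendsto f (𝓝[>] 0) (𝓝 L₀)) (hg0 : Tendsto g (𝓝[>] 0) (𝓝 L₀))
    (hf_inf : Tendsto f atTop (𝓝 L)) (hg_inf : Tendsto g atTop (𝓝 L)) {z : ℝ} (hz : 0 < z) :
    f z ≤ g z := by
  have hderiv : ∀ x > 0, deriv (f - g) x = deriv f x - deriv g x := fun x hx =>
    deriv_sub ((hf x hx).differentiableAt two_ne_zero) ((hg x hx).differentiableAt two_ne_zero)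
  have hderiv2 : ∀ x > 0, deriv (deriv (f - g)) x = deriv (deriv f) x - deriv (deriv g) x :=
    fun x hx => by
      simpa only [iteratedDeriv_succ, iteratedDeriv_zero] using
        iteratedDeriv_sub (hf x hx) (hg x hx)
  have hode : ∀ x > 0,
      a x * deriv (deriv (f - g)) x + b x * deriv (f - g) x = c x * (f - g) x := by
    intro x hx
    rw [hderiv2 x hx, hderiv x hx, Pi.sub_apply]
    linear_combination hf_ode x hx - hg_ode x hx
  have hcont : ContinuousOn (f - g) (Ioi 0) := fun x hx =>
    ((hf x hx).continuousAt.sub (hg x hx).continuousAt).continuousWithinAt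
  exact sub_nonpos.1 (nonpos_of_ode_of_tendsto_zero hcont ha hc hode
    (sub_self L₀ ▸ hf0.sub hg0) (sub_self L ▸ hf_inf.sub hg_inf) hz)

theorem eqOn_of_ode_of_tendsto {f g a b c : ℝ → ℝ} {L₀ L : ℝ}
    (hf : ∀ z > 0, ContDiffAt ℝ 2 f z) (hg : ∀ z > 0, ContDiffAt ℝ 2 g z)
    (ha : ∀ z > 0, 0 ≤ a z) (hc : ∀ z > 0, 0 < c z)
    (hf_ode : ∀ z > 0, a z * deriv (deriv f) z + b z * deriv f z = c z * f z)
    (hg_ode : ∀ z > 0, a z * deriv (deriv g) z + b z * deriv g z = c z * g z)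
    (hf0 : Tendsto f (𝓝[>] 0) (𝓝 L₀)) (hg0 : Tendsto g (𝓝[>] 0) (𝓝 L₀))
    (hf_inf : Tendsto f atTop (𝓝 L)) (hg_inf : Tendsto g atTop (𝓝 L)) :
    EqOn f g (Ioi 0) := fun _ hz =>
  le_antisymm (le_of_ode_of_tendsto hf hg ha hc hf_ode hg_ode hf0 hg0 hf_inf hg_inf hz)
    (le_of_ode_of_tendsto hg hf ha hc hg_ode hf_ode hg0 hf0 hg_inf hf_inf hz)

theorem prod_range_add_eq_Gamma_div {x : ℝ} (hx : 0 < x) (n : ℕ) :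
    ∏ k ∈ Finset.range n, (x + k) = Gamma (x + n) / Gamma x := by
  induction n with
  | zero => simp [(Gamma_pos_of_pos hx).ne']
  | succ n ih =>
    rw [Finset.prod_range_succ, ih, Nat.cast_succ, ← add_assoc,
      Gamma_add_one (by positivity : x + n ≠ 0)]
    ring

theorem integral_rpow_mul_one_sub_rpow {u v : ℝ} (hu : 0 < u) (hv : 0 < v) :
    ∫ t in (0 : ℝ)..1, t ^ (u - 1) * (1 - t) ^ (v - 1) = Gamma u * Gamma v / Gamma (u + v) := by
  have hB := Complex.betaIntegral_eq_Gamma_mul_div (u : ℂ) v (by simpa) (by simpa)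
  rw [Complex.betaIntegral, ← Complex.ofReal_add, Complex.Gamma_ofReal, Complex.Gamma_ofReal,
    Complex.Gamma_ofReal] at hB
  apply Complex.ofReal_injective
  rw [← intervalIntegral.integral_ofReal]
  push_cast
  rw [← hB]
  refine intervalIntegral.integral_congr fun t ht => ?_
  rw [uIcc_of_le zero_le_one] at ht
  rw [Complex.ofReal_cpow ht.1, Complex.ofReal_cpow (sub_nonneg.2 ht.2)]
  norm_cast

def finiteLaplace (w : ℝ → ℝ) (z : ℝ) : ℝ := ∫ t in (0 : ℝ)..1, exp (-(z * t)) * w t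

theorem hasDerivAt_finiteLaplace {w : ℝ → ℝ} (hw : Continuous w) (z : ℝ) :
    HasDerivAt (finiteLaplace w) (finiteLaplace (fun t => -t * w t) z) z := by
  have hF : ∀ x, Continuous fun t => exp (-(x * t)) * w t := fun x => by fun_prop
  have hF' : ∀ x, Continuous fun t => exp (-(x * t)) * (-t * w t) := fun x => by fun_prop
  refine (hasDerivAt_integral_of_dominated_loc_of_deriv_le
    (F := fun x t => exp (-(x * t)) * w t) (F' := fun x t => exp (-(x * t)) * (-t * w t))
    (Metric.ball_mem_nhds z one_pos) (Eventually.of_forall fun x => (hF x).aestronglyMeasurable)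
    ((hF z).intervalIntegrable 0 1) (hF' z).aestronglyMeasurable
    (bound := fun t => exp (|z| + 1) * |w t|) ?_
    ((continuous_const.mul hw.abs).intervalIntegrable 0 1) ?_).2
  · refine ae_of_all _ fun t ht x hx => ?_
    rw [uIoc_of_le zero_le_one] at ht
    have hx : |x| ≤ |z| + 1 := by
      have := abs_sub_abs_le_abs_sub x z
      rw [Metric.mem_ball, dist_eq] at hx
      linarith
    have hexp : exp (-(x * t)) ≤ exp (|z| + 1) := by
      gcongr
      nlinarith [neg_abs_le x, abs_nonneg x, ht.1, ht.2]
    rw [norm_mul, norm_mul, norm_neg, norm_of_nonneg (exp_pos _).le, norm_of_nonneg ht.1.le,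
      norm_eq_abs]
    calc exp (-(x * t)) * (t * |w t|) ≤ exp (|z| + 1) * (1 * |w t|) := by
          gcongr
          · exact mul_nonneg ht.1.le (abs_nonneg _)
          · exact ht.2
      _ = exp (|z| + 1) * |w t| := by ring
  · refine ae_of_all _ fun t _ x _ => ?_
    exact ((hasDerivAt_mul_const t).fun_neg.exp.mul_const (w t)).congr_deriv (by ring)

theorem contDiff_finiteLaplace {w : ℝ → ℝ} (hw : Continuous w) (n : ℕ) :
    ContDiff ℝ n (finiteLaplace w) := by
  induction n generalizing w with
  | zero => exact contDiff_zero.2 <| continuous_iff_continuousAt.2 fun z =>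
      (hasDerivAt_finiteLaplace hw z).continuousAt
  | succ n ih =>
    have hderiv : deriv (finiteLaplace w) = finiteLaplace (fun t => -t * w t) :=
      funext fun z => (hasDerivAt_finiteLaplace hw z).deriv
    push_cast
    refine (contDiff_succ_iff_deriv (n := n)).2
      ⟨fun z => (hasDerivAt_finiteLaplace hw z).differentiableAt, by simp, ?_⟩
    rw [hderiv]
    exact ih (by fun_prop)

theorem hasSum_finiteLaplace {w : ℝ → ℝ} (hw : Continuous w) (z : ℝ) :
    HasSum (fun n : ℕ => (-z) ^ n / n.factorial * ∫ t in (0 : ℝ)..1, t ^ n * w t)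
      (finiteLaplace w z) := by
  have hexp : ∀ x : ℝ, HasSum (fun n : ℕ => x ^ n / n.factorial) (exp x) := fun x =>
    Real.exp_eq_exp_ℝ ▸ NormedSpace.expSeries_div_hasSum_exp x
  simp_rw [← intervalIntegral.integral_const_mul]
  refine intervalIntegral.hasSum_integral_of_dominated_convergence
    (fun n t => |z| ^ n / n.factorial * |w t|) (fun n => by fun_prop) ?_ ?_ ?_ ?_
  · refine fun n => ae_of_all _ fun t ht => ?_
    rw [uIoc_of_le zero_le_one] at ht
    rw [norm_mul, norm_mul, norm_div, norm_pow, norm_neg, Real.norm_natCast, norm_pow,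
      norm_eq_abs, norm_eq_abs, abs_of_nonneg ht.1.le]
    have : t ^ n ≤ 1 := pow_le_one₀ ht.1.le ht.2
    calc |z| ^ n / n.factorial * (t ^ n * |w t|) ≤ |z| ^ n / n.factorial * (1 * |w t|) := by
          gcongr
      _ = _ := by ring
  · exact ae_of_all _ fun t _ => (hexp |z|).summable.mul_right _
  · simp_rw [tsum_mul_right, (hexp |z|).tsum_eq]
    exact (continuous_const.mul hw.abs).intervalIntegrable 0 1
  · refine ae_of_all _ fun t _ => ?_
    have e : (fun n : ℕ => (-(z * t)) ^ n / n.factorial * w t) =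
        fun n : ℕ => (-z) ^ n / n.factorial * (t ^ n * w t) := by
      ext n
      rw [← neg_mul, mul_pow]
      ring
    exact e ▸ (hexp (-(z * t))).mul_right (w t)

def betaWeight (p q t : ℝ) : ℝ := t ^ (p - 1) * (1 - t) ^ (q - 1)

theorem continuous_betaWeight {p q : ℝ} (hp : 1 ≤ p) (hq : 1 ≤ q) :
    Continuous (betaWeight p q) := by
  have hp' : 0 ≤ p - 1 := by linarith
  have hq' : 0 ≤ q - 1 := by linarith
  unfold betaWeight
  fun_prop

theorem integral_pow_mul_betaWeight {p q : ℝ} (hp : 0 < p) (hq : 0 < q) (n : ℕ) :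
    ∫ t in (0 : ℝ)..1, t ^ n * betaWeight p q t
      = Gamma (p + n) * Gamma q / Gamma (p + q + n) := by
  rw [show p + q + n = (p + n) + q by ring, ← integral_rpow_mul_one_sub_rpow (by positivity) hq]
  refine intervalIntegral.integral_congr_ae (ae_of_all _ fun t ht => ?_)
  rw [uIoc_of_le zero_le_one] at ht
  rw [betaWeight, ← mul_assoc, ← rpow_natCast, ← rpow_add ht.1]
  ring_nf

theorem kummerM_neg_eq_finiteLaplace {p q : ℝ} (hp : 1 ≤ p) (hq : 1 ≤ q) (z : ℝ) :
    kummerM p (p + q) (-z)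
      = Gamma (p + q) / (Gamma p * Gamma q) * finiteLaplace (betaWeight p q) z := by
  have hp0 : 0 < p := by linarith
  have hq0 : 0 < q := by linarith
  have hΓ : ∀ x : ℝ, 0 < x → Gamma x ≠ 0 := fun x hx => (Gamma_pos_of_pos hx).ne'
  rw [kummerM, ← ((hasSum_finiteLaplace (continuous_betaWeight hp hq) z).mul_left _).tsum_eq]
  congr 1 with n
  rw [integral_pow_mul_betaWeight hp0 hq0, prod_range_add_eq_Gamma_div hp0,
    prod_range_add_eq_Gamma_div (by positivity)]
  field_simp [hΓ p hp0, hΓ q hq0, hΓ (p + q) (by positivity), hΓ (p + n) (by positivity),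
    hΓ (p + q + n) (by positivity)]

theorem finiteLaplace_betaWeight_kummer_ode {p q : ℝ} (hp : 1 ≤ p) (hq : 1 ≤ q) (z : ℝ) :
    z * finiteLaplace (fun t => -t * (-t * betaWeight p q t)) z
      + (p + q + z) * finiteLaplace (fun t => -t * betaWeight p q t) z
      + p * finiteLaplace (betaWeight p q) z = 0 := by
  have hw := continuous_betaWeight hp hq
  have hsplit : ∀ {x r : ℝ}, 0 ≤ x → 1 ≤ r → x ^ r = x ^ (r - 1) * x := fun hx hr => by
    rw [← rpow_add_one' hx (by linarith), sub_add_cancel]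
  have hderiv : ∀ t ∈ uIcc (0 : ℝ) 1,
      HasDerivAt (fun t => exp (-(z * t)) * (t ^ p * (1 - t) ^ q))
        (z * (exp (-(z * t)) * (-t * (-t * betaWeight p q t)))
          + (p + q + z) * (exp (-(z * t)) * (-t * betaWeight p q t))
          + p * (exp (-(z * t)) * betaWeight p q t)) t := by
    intro t ht
    rw [uIcc_of_le zero_le_one] at ht
    have h := (hasDerivAt_const_mul z).fun_neg.exp.fun_mul
      ((hasDerivAt_rpow_const (Or.inr hp)).fun_mul
        (((hasDerivAt_id' t).const_sub 1).rpow_const (Or.inr hq)))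
    refine h.congr_deriv ?_
    rw [hsplit ht.1 hp, hsplit (sub_nonneg.2 ht.2) hq, betaWeight]
    ring
  have hint := integral_eq_sub_of_hasDerivAt hderiv
    (Continuous.intervalIntegrable (by fun_prop) _ _)
  rw [intervalIntegral.integral_add (Continuous.intervalIntegrable (by fun_prop) _ _)
      (Continuous.intervalIntegrable (by fun_prop) _ _),
    intervalIntegral.integral_add (Continuous.intervalIntegrable (by fun_prop) _ _)
      (Continuous.intervalIntegrable (by fun_prop) _ _),
    intervalIntegral.integral_const_mul, intervalIntegral.integral_const_mul,
    intervalIntegral.integral_const_mul] at hint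
  simpa [finiteLaplace, zero_rpow (by linarith : p ≠ 0), zero_rpow (by linarith : q ≠ 0)]
    using hint

theorem rpow_mul_finiteLaplace_betaWeight_eq_integral {p q z : ℝ} (hz : 0 < z) :
    z ^ p * finiteLaplace (betaWeight p q) z = ∫ u in Ioi 0,
      (Iic z).indicator (fun u => exp (-u) * u ^ (p - 1) * (1 - u / z) ^ (q - 1)) u := by
  set f : ℝ → ℝ := fun u => exp (-u) * u ^ (p - 1) * (1 - u / z) ^ (q - 1)
  have hsubst : ∀ t ∈ uIcc (0 : ℝ) 1,
      exp (-(z * t)) * betaWeight p q t = z ^ (1 - p) * f (z * t) := by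
    intro t ht
    rw [uIcc_of_le zero_le_one] at ht
    simp only [f, betaWeight, mul_rpow hz.le ht.1, mul_div_cancel_left₀ _ hz.ne']
    have hz1 : z ^ (1 - p) * z ^ (p - 1) = 1 := by rw [← rpow_add hz]; simp
    linear_combination (-(exp (-(z * t)) * t ^ (p - 1) * (1 - t) ^ (q - 1))) * hz1
  rw [MeasureTheory.integral_indicator measurableSet_Iic,
    Measure.restrict_restrict measurableSet_Iic, Iic_inter_Ioi,
    ← intervalIntegral.integral_of_le hz.le, finiteLaplace, intervalIntegral.integral_congr hsubst,
    intervalIntegral.integral_const_mul, intervalIntegral.integral_comp_mul_left f hz.ne',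
    mul_zero, mul_one, smul_eq_mul, ← mul_assoc, ← mul_assoc, ← rpow_add hz, ← rpow_neg_one,
    ← rpow_add hz]
  simp

theorem tendsto_rpow_mul_finiteLaplace_betaWeight {p q : ℝ} (hp : 0 < p) (hq : 1 ≤ q) :
    Tendsto (fun z => z ^ p * finiteLaplace (betaWeight p q) z) atTop (𝓝 (Gamma p)) := by
  set F : ℝ → ℝ → ℝ := fun z =>
    (Iic z).indicator (fun u => exp (-u) * u ^ (p - 1) * (1 - u / z) ^ (q - 1))
  have hmeas : ∀ z, AEStronglyMeasurable (F z) (volume.restrict (Ioi 0)) := fun z =>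
    (Measurable.aestronglyMeasurable (by fun_prop)).indicator measurableSet_Iic
  have hbound : ∀ᶠ z in atTop,
      ∀ᵐ u ∂volume.restrict (Ioi 0), ‖F z u‖ ≤ exp (-u) * u ^ (p - 1) := by
    filter_upwards [eventually_gt_atTop 0] with z hz
    refine (ae_restrict_iff' measurableSet_Ioi).2 (ae_of_all _ fun u (hu : 0 < u) => ?_)
    by_cases huz : u ≤ z
    · have h1 : 0 ≤ 1 - u / z := sub_nonneg.2 ((div_le_one hz).2 huz)
      have h2 : (1 - u / z) ^ (q - 1) ≤ 1 :=
        rpow_le_one h1 (by linarith [div_nonneg hu.le hz.le]) (by linarith)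
      simp only [F, indicator_of_mem (mem_Iic.2 huz), norm_eq_abs]
      rw [abs_of_nonneg (by positivity)]
      exact mul_le_of_le_one_right (by positivity) h2
    · simp only [F, indicator_of_notMem (mt mem_Iic.1 huz), norm_zero]
      positivity
  have hlim : ∀ᵐ u ∂volume.restrict (Ioi 0),
      Tendsto (fun z => F z u) atTop (𝓝 (exp (-u) * u ^ (p - 1))) := by
    refine ae_of_all _ fun u => ?_
    have h : Tendsto (fun z => exp (-u) * u ^ (p - 1) * (1 - u / z) ^ (q - 1)) atTop
        (𝓝 (exp (-u) * u ^ (p - 1) * (1 - 0) ^ (q - 1))) :=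
      tendsto_const_nhds.mul ((tendsto_const_nhds.sub
        (tendsto_const_nhds.div_atTop tendsto_id)).rpow_const (Or.inl (by norm_num)))
    rw [sub_zero, one_rpow, mul_one] at h
    refine h.congr' ?_
    filter_upwards [eventually_ge_atTop u] with z huz
    simp only [F, indicator_of_mem (mem_Iic.2 huz)]
  rw [Gamma_eq_integral hp]
  refine (tendsto_integral_filter_of_dominated_convergence _ (Eventually.of_forall hmeas) hbound
    (GammaIntegral_convergent hp) hlim).congr' ?_
  filter_upwards [eventually_gt_atTop 0] with z hz
  exact (rpow_mul_finiteLaplace_betaWeight_eq_integral hz).symm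

def kummerProfile (a z : ℝ) : ℝ := z ^ a * finiteLaplace (betaWeight a a) z

theorem rpow_mul_kummerM_eq_kummerProfile {a : ℝ} (ha : 1 ≤ a) (z : ℝ) :
    z ^ a * kummerM a (2 * a) (-z) = Gamma (2 * a) / Gamma a ^ 2 * kummerProfile a z := by
  rw [two_mul, kummerM_neg_eq_finiteLaplace ha ha, kummerProfile, sq]
  ring

theorem contDiffAt_kummerProfile {a z : ℝ} (ha : 1 ≤ a) (hz : z ≠ 0) :
    ContDiffAt ℝ 2 (kummerProfile a) z :=
  (contDiffAt_rpow_const_of_ne hz).mul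
    ((contDiff_finiteLaplace (continuous_betaWeight ha ha) 2).contDiffAt)

theorem kummerProfile_ode {a z : ℝ} (ha : 1 ≤ a) (hz : 0 < z) :
    z ^ 2 * deriv (deriv (kummerProfile a)) z + z ^ 2 * deriv (kummerProfile a) z
      = a * (a - 1) * kummerProfile a z := by
  have hw := continuous_betaWeight ha ha
  set L₀ := finiteLaplace (betaWeight a a)
  set L₁ := finiteLaplace (fun t => -t * betaWeight a a t)
  set L₂ := finiteLaplace (fun t => -t * (-t * betaWeight a a t))
  have hL₀ : ∀ x, HasDerivAt L₀ (L₁ x) x := hasDerivAt_finiteLaplace hw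
  have hL₁ : ∀ x, HasDerivAt L₁ (L₂ x) x := hasDerivAt_finiteLaplace (by fun_prop)
  have hd1 : ∀ x > 0,
      HasDerivAt (kummerProfile a) (a * x ^ (a - 1) * L₀ x + x ^ a * L₁ x) x :=
    fun x hx => (hasDerivAt_rpow_const (Or.inl hx.ne')).mul (hL₀ x)
  have hd2 : HasDerivAt (fun x => a * x ^ (a - 1) * L₀ x + x ^ a * L₁ x)
      (a * ((a - 1) * z ^ (a - 1 - 1)) * L₀ z + a * z ^ (a - 1) * L₁ z
        + (a * z ^ (a - 1) * L₁ z + z ^ a * L₂ z)) z :=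
    (((hasDerivAt_rpow_const (Or.inl hz.ne')).const_mul a).mul (hL₀ z)).add
      ((hasDerivAt_rpow_const (Or.inl hz.ne')).mul (hL₁ z))
  have hderiv : deriv (kummerProfile a) =ᶠ[𝓝 z]
      fun x => a * x ^ (a - 1) * L₀ x + x ^ a * L₁ x :=
    eventually_of_mem (Ioi_mem_nhds hz) fun x hx => (hd1 x hx).deriv
  have e1 : z ^ (a - 1) = z ^ (a - 1 - 1) * z := by
    rw [← rpow_add_one hz.ne', sub_add_cancel]
  have e2 : z ^ a = z ^ (a - 1 - 1) * z * z := by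
    rw [← e1, ← rpow_add_one hz.ne', sub_add_cancel]
  rw [hderiv.deriv_eq, hd2.deriv, (hd1 z hz).deriv, kummerProfile, e1, e2]
  linear_combination (z ^ (a - 1 - 1) * z ^ 3) * finiteLaplace_betaWeight_kummer_ode ha ha z

theorem kummerProfile_tendsto_zero {a : ℝ} (ha : 1 ≤ a) :
    Tendsto (kummerProfile a) (𝓝[>] 0) (𝓝 0) := by
  have hcont : ContinuousAt (kummerProfile a) 0 :=
    (continuousAt_rpow_const 0 a (Or.inr (by linarith))).mul
      (hasDerivAt_finiteLaplace (continuous_betaWeight ha ha) 0).continuousAt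
  have hzero : kummerProfile a 0 = 0 := by
    rw [kummerProfile, zero_rpow (by linarith), zero_mul]
  simpa only [hzero] using hcont.tendsto.mono_left nhdsWithin_le_nhds

/-- For fixed `s > 0`, `λ = √(1/4+s)`, `a₊ = 1/2 + λ`, the function
`g(z) = (1/s)(Γ(a₊)/Γ(2a₊)) z^{a₊} M(a₊, 2a₊, -z)` is the unique solution of
`z²g'' + z²g' - sg = 0` on `(0,∞)` with `g(0⁺) = 0` and `g(∞) = 1/s`. -/
theorem laplace_transform_ode_unique_solution
    (s : ℝ) (hs : 0 < s) :
    let l : ℝ := Real.sqrt (1 / 4 + s)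
    let a : ℝ := 1 / 2 + l
    let g : ℝ → ℝ := fun z =>
      (1 / s) * (Real.Gamma a / Real.Gamma (2 * a)) * z ^ a * kummerM a (2 * a) (-z)
    (∀ z : ℝ, 0 < z →
        z ^ 2 * deriv (deriv g) z + z ^ 2 * deriv g z - s * g z = 0) ∧
    Filter.Tendsto g (nhdsWithin 0 (Set.Ioi 0)) (nhds 0) ∧
    Filter.Tendsto g Filter.atTop (nhds (1 / s)) ∧
    ∀ h : ℝ → ℝ, (∀ z : ℝ, 0 < z → ContDiffAt ℝ 2 h z) →
      (∀ z : ℝ, 0 < z →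
        z ^ 2 * deriv (deriv h) z + z ^ 2 * deriv h z - s * h z = 0) →
      Filter.Tendsto h (nhdsWithin 0 (Set.Ioi 0)) (nhds 0) →
      Filter.Tendsto h Filter.atTop (nhds (1 / s)) →
      ∀ z : ℝ, 0 < z → h z = g z := by
  intro l a g
  have hl : 1 / 2 < l := by
    have h := sqrt_lt_sqrt (by norm_num) (by linarith : (1 / 2 : ℝ) ^ 2 < 1 / 4 + s)
    rwa [sqrt_sq (by norm_num)] at h
  have ha : 1 ≤ a := by simp only [a]; linarith
  have has : a * (a - 1) = s := by
    simp only [a, l]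
    linear_combination sq_sqrt (by linarith : (0 : ℝ) ≤ 1 / 4 + s)
  have hΓ := (Gamma_pos_of_pos (by linarith : 0 < a)).ne'
  have hΓ₂ := (Gamma_pos_of_pos (by linarith : 0 < 2 * a)).ne'
  have hg : g = fun z => (s * Gamma a)⁻¹ * kummerProfile a z := by
    funext z
    simp only [g]
    rw [mul_assoc, rpow_mul_kummerM_eq_kummerProfile ha]
    field_simp
  have hg_ode : ∀ z > 0, z ^ 2 * deriv (deriv g) z + z ^ 2 * deriv g z = s * g z := by
    intro z hz
    simp only [hg, deriv_const_mul_field']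
    linear_combination (s * Gamma a)⁻¹ * kummerProfile_ode ha hz
      + (s * Gamma a)⁻¹ * kummerProfile a z * has
  have hg_C2 : ∀ z > 0, ContDiffAt ℝ 2 g z := fun z hz =>
    hg ▸ contDiffAt_const.mul (contDiffAt_kummerProfile ha hz.ne')
  have hg0 : Tendsto g (𝓝[>] 0) (𝓝 0) := by
    simpa only [hg, mul_zero] using (kummerProfile_tendsto_zero ha).const_mul (s * Gamma a)⁻¹
  have hg_inf : Tendsto g atTop (𝓝 (1 / s)) := by
    rw [hg, show 1 / s = (s * Gamma a)⁻¹ * Gamma a by field_simp]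
    exact (tendsto_rpow_mul_finiteLaplace_betaWeight (by linarith) ha).const_mul _
  refine ⟨fun z hz => sub_eq_zero.2 (hg_ode z hz), hg0, hg_inf,
    fun h hh h_ode h0 h_inf z hz => ?_⟩
  exact eqOn_of_ode_of_tendsto (a := fun z => z ^ 2) (b := fun z => z ^ 2) (c := fun _ => s)
    hh hg_C2 (fun z _ => sq_nonneg z) (fun _ _ => hs) (fun z hz => sub_eq_zero.1 (h_ode z hz))
    hg_ode h0 hg0 h_inf hg_inf hz
end
end
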